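/- Suppose N training pairs (x^{(i)}, y^{(i)}) are given and the velocity field is constrained to the form b_t(ξ,y) = ∑_k φ_k(y) b_{t,k}(ξ), where the functions φ_k satisfy φ_j(y^{(i)}) = δ_{ij} and ∑_j φ_j = 1. If ρ_Z > 0 everywhere, the minimizer of the empirical loss ∑_i ∫_0^1 ∫ |b_t(I_t(z, x^{(i)}), y^{(i)}) - (x^{(i)} - z)|^2 ρ_Z(z) dz dt over coefficients b_{t,k} is b_{t,j}(ξ) = (x^{(j)} - ξ)/(1-t), and therefore the minimizing velocity is b_t*(ξ, y) = (∑_j φ_j(y) x^{(j)} - ξ)/(1-t). -/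

import Mathlib

/-!
The interpolation property `φ_j(y⁽ⁱ⁾) = δᵢⱼ` makes the velocity at the `i`-th training pair equal
to the single coefficient `b_{t,i}`. Choosing `b_{t,i}(ξ) = (x⁽ⁱ⁾ - ξ)/(1 - t)` makes every
residual vanish identically, since `x - I_t(z, x) = (1 - t)(x - z)`; so this choice attains the
smallest possible value `0` of the (nonnegative) loss. The closed form of the velocity then follows
from the partition of unity `∑ⱼ φⱼ = 1`.
-/

open MeasureTheory

lemma Finset.sum_smul_eq_of_eq_ite {ι R M : Type*} [Fintype ι] [DecidableEq ι] [Semiring R]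
    [AddCommMonoid M] [Module R M] {w : ι → R} {i : ι}
    (hw : ∀ j, w j = if i = j then 1 else 0) (v : ι → M) :
    ∑ k, w k • v k = v i := by
  simp [hw]

lemma Finset.sum_smul_smul_sub_of_sum_eq_one {ι R M : Type*} [Fintype ι] [CommRing R]
    [AddCommGroup M] [Module R M] {w : ι → R} (hw : ∑ j, w j = 1) (a : R) (x : ι → M) (ξ : M) :
    ∑ k, w k • a • (x k - ξ) = a • ((∑ j, w j • x j) - ξ) := by
  simp only [smul_comm _ a, ← Finset.smul_sum, smul_sub, Finset.sum_sub_distrib,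
    ← Finset.sum_smul, hw, one_smul]

lemma inv_one_sub_smul_sub_interpolant {𝕜 E : Type*} [Field 𝕜] [AddCommGroup E] [Module 𝕜 E]
    {t : 𝕜} (ht : t ≠ 1) (x z : E) :
    (1 - t)⁻¹ • (x - ((1 - t) • z + t • x)) = x - z := by
  have hx : x - ((1 - t) • z + t • x) = (1 - t) • (x - z) := by module
  rw [hx, inv_smul_smul₀ (sub_ne_zero.mpr ht.symm)]

section IteratedIntegral

variable {ι α : Type*} [Fintype ι] [MeasurableSpace α] {μ : Measure α} {s : Set ℝ}
  {g : ι → ℝ → α → ℝ}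

lemma sum_setIntegral_integral_nonneg (hg : ∀ i t z, 0 ≤ g i t z) :
    0 ≤ ∑ i, ∫ t in s, ∫ z, g i t z ∂μ :=
  Finset.sum_nonneg fun i _ => integral_nonneg fun t => integral_nonneg (hg i t)

lemma sum_setIntegral_integral_eq_zero (hs : MeasurableSet s)
    (hg : ∀ i, ∀ t ∈ s, ∀ z, g i t z = 0) :
    ∑ i, ∫ t in s, ∫ z, g i t z ∂μ = 0 := by
  refine Finset.sum_eq_zero fun i _ => ?_
  rw [setIntegral_congr_fun hs (g := fun _ => 0) fun t ht => ?_, integral_zero]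
  simp [hg i t ht]

end IteratedIntegral

theorem stmt12_general {d D N : ℕ} (x : Fin N → EuclideanSpace ℝ (Fin d))
    (y : Fin N → EuclideanSpace ℝ (Fin D))
    (φ : Fin N → EuclideanSpace ℝ (Fin D) → ℝ)
    (hinterp : ∀ i j, φ j (y i) = if i = j then 1 else 0)
    (hpu : ∀ yy, ∑ j, φ j yy = 1)
    (ρZ : EuclideanSpace ℝ (Fin d) → ℝ) (hρZ : ∀ z, 0 < ρZ z)
    (L : (Fin N → ℝ → EuclideanSpace ℝ (Fin d) → EuclideanSpace ℝ (Fin d)) → ℝ)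
    (hL : ∀ c, L c = ∑ i, ∫ t in Set.Ioo (0:ℝ) 1, ∫ z,
      ‖(∑ k, φ k (y i) • c k t ((1 - t) • z + t • x i)) - (x i - z)‖ ^ 2 * ρZ z)
    (cstar : Fin N → ℝ → EuclideanSpace ℝ (Fin d) → EuclideanSpace ℝ (Fin d))
    (hcstar : ∀ j t ξ, cstar j t ξ = (1 - t)⁻¹ • (x j - ξ)) :
    (∀ c : Fin N → ℝ → EuclideanSpace ℝ (Fin d) → EuclideanSpace ℝ (Fin d),
      (∀ k t, Measurable (c k t)) → L cstar ≤ L c) ∧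
      ∀ t ξ yy, ∑ k, φ k yy • cstar k t ξ = (1 - t)⁻¹ • ((∑ j, φ j yy • x j) - ξ) := by
  refine ⟨fun c _ => ?_, fun t ξ yy => ?_⟩
  · have hstar : L cstar = 0 := by
      rw [hL]
      refine sum_setIntegral_integral_eq_zero measurableSet_Ioo fun i t ht z => ?_
      rw [Finset.sum_smul_eq_of_eq_ite (hinterp i), hcstar,
        inv_one_sub_smul_sub_interpolant ht.2.ne, sub_self]
      simp
    rw [hstar, hL]
    exact sum_setIntegral_integral_nonneg fun i t z => mul_nonneg (sq_nonneg _) (hρZ z).le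
  · simp only [hcstar]
    exact Finset.sum_smul_smul_sub_of_sum_eq_one (hpu yy) _ x ξ

theorem stmt12 {d D N : ℕ} (x : Fin N → EuclideanSpace ℝ (Fin d))
    (y : Fin N → EuclideanSpace ℝ (Fin D))
    (φ : Fin N → EuclideanSpace ℝ (Fin D) → ℝ)
    (hinterp : ∀ i j, φ j (y i) = if i = j then 1 else 0)
    (hpu : ∀ yy, ∑ j, φ j yy = 1)
    (ρZ : EuclideanSpace ℝ (Fin d) → ℝ) (hρZ : ∀ z, 0 < ρZ z) (hρZm : Measurable ρZ)
    (L : (Fin N → ℝ → EuclideanSpace ℝ (Fin d) → EuclideanSpace ℝ (Fin d)) → ℝ)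
    (hL : ∀ c, L c = ∑ i, ∫ t in Set.Ioo (0:ℝ) 1, ∫ z,
      ‖(∑ k, φ k (y i) • c k t ((1 - t) • z + t • x i)) - (x i - z)‖ ^ 2 * ρZ z)
    (cstar : Fin N → ℝ → EuclideanSpace ℝ (Fin d) → EuclideanSpace ℝ (Fin d))
    (hcstar : ∀ j t ξ, cstar j t ξ = (1 - t)⁻¹ • (x j - ξ)) :
    (∀ c : Fin N → ℝ → EuclideanSpace ℝ (Fin d) → EuclideanSpace ℝ (Fin d),
      (∀ k t, Measurable (c k t)) → L cstar ≤ L c) ∧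
      ∀ t ξ yy, ∑ k, φ k yy • cstar k t ξ = (1 - t)⁻¹ • ((∑ j, φ j yy • x j) - ξ) :=
  stmt12_general x y φ hinterp hpu ρZ hρZ L hL cstar hcstar
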